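/- In the weighted partition construction, if there is a subset J ⊆ {0,...,n−1} with Σ_{j∈J} k_j = K, then the voting order that, for each j ∈ J, orders the j-th path as 3j ≺ 3j+1 ≺ 3j+2, and for each j ∉ J orders it as 3j+1 ≺ 3j ≺ 3j+2 (followed by the isolated agent), yields final scores: score(b) = KB, score(c) ≤ KB + 2n, and score(a) ≥ KB + 2n, so that a is a co-winner. -/

import Mathlib

open scoped Classical
open Finset

/-- The set of neighbors of `x` (w.r.t. adjacency `adj`) that vote before `x`
in the voting order `ord` (smaller `ord`-value votes earlier). -/
noncomputable def prior {V : Type*} [Fintype V] (adj : V → V → Prop) (ord : V → ℕ) (x : V) :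
    Finset V :=
  Finset.univ.filter fun y => adj x y ∧ ord y < ord x

/-- Refined social poll model: `f` is the (unique) vote function arising from the
voting order `ord`: an agent `x` votes `c ∈ P x` if strictly more than half of her
previously-voting neighbors voted `c`, and otherwise votes her top choice `p1 x`. -/
def Consistent {V C : Type*} [Fintype V] (adj : V → V → Prop)
    (P : V → Finset C) (p1 : V → C) (ord : V → ℕ) (f : V → C) : Prop :=
  ∀ x : V,
    (∃ c ∈ P x,
        (2 * (((prior adj ord x).filter fun y => f y = c).card) > (prior adj ord x).card)
        ∧ f x = c)
    ∨ ((¬ ∃ c ∈ P x,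
          2 * (((prior adj ord x).filter fun y => f y = c).card) > (prior adj ord x).card)
        ∧ f x = p1 x)

/-- The score of candidate `c`: the number of agents voting for `c`. -/
noncomputable def score {V C : Type*} [Fintype V] (f : V → C) (c : C) : ℕ :=
  (Finset.univ.filter fun x => f x = c).card

/-- Weighted refined social poll model: majority influence is measured by total weight. -/
def WConsistent {V C : Type*} [Fintype V] (adj : V → V → Prop) (w : V → ℕ)
    (P : V → Finset C) (p1 : V → C) (ord : V → ℕ) (f : V → C) : Prop :=
  ∀ x : V,
    (∃ c ∈ P x,
        (2 * (((prior adj ord x).filter fun y => f y = c).sum w) > ((prior adj ord x).sum w))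
        ∧ f x = c)
    ∨ ((¬ ∃ c ∈ P x,
          2 * (((prior adj ord x).filter fun y => f y = c).sum w) > ((prior adj ord x).sum w))
        ∧ f x = p1 x)

/-- The weighted score of candidate `c`: total weight of agents voting for `c`. -/
noncomputable def wscore {V C : Type*} [Fintype V] (w : V → ℕ) (f : V → C) (c : C) : ℕ :=
  (Finset.univ.filter fun x => f x = c).sum w

/-! The weighted partition construction. Candidates are `Fin 3` with `a = 0`, `b = 1`,
`c = 2`. For each `j < n` there are three agents `3j, 3j+1, 3j+2` forming a path, with
preferences `(c,b)`, `(a,c)`, `(b,c)` and weights `1`, `1`, `k_j · B` where `B = 2n+1`.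
There is one additional isolated agent `3n` with preferences `(a,c)` and weight `KB + 2n`. -/

def B7 (n : ℕ) : ℕ := 2 * n + 1

def adj7 (n : ℕ) (x y : Fin (3 * n + 1)) : Prop :=
  (x : ℕ) / 3 = (y : ℕ) / 3 ∧ (x : ℕ) / 3 < n ∧
    ((x : ℕ) + 1 = (y : ℕ) ∨ (y : ℕ) + 1 = (x : ℕ))

def P7 (n : ℕ) (x : Fin (3 * n + 1)) : Finset (Fin 3) :=
  if (x : ℕ) = 3 * n then {0, 2}
  else if (x : ℕ) % 3 = 0 then {2, 1}
  else if (x : ℕ) % 3 = 1 then {0, 2}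
  else {1, 2}

def p17 (n : ℕ) (x : Fin (3 * n + 1)) : Fin 3 :=
  if (x : ℕ) = 3 * n then 0
  else if (x : ℕ) % 3 = 0 then 2
  else if (x : ℕ) % 3 = 1 then 0
  else 1

def w7 (n K : ℕ) (k : ℕ → ℕ) (x : Fin (3 * n + 1)) : ℕ :=
  if (x : ℕ) = 3 * n then K * B7 n + 2 * n
  else if (x : ℕ) % 3 = 2 then k ((x : ℕ) / 3) * B7 n
  else 1

/-- The specific voting order: for `j ∈ J` the `j`-th path votes `3j ≺ 3j+1 ≺ 3j+2`,
for `j ∉ J` it votes `3j+1 ≺ 3j ≺ 3j+2`, and the isolated agent votes anywhere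
(different paths are interleaved arbitrarily; only the within-path order matters). -/
noncomputable def ord17 (n : ℕ) (J : Finset ℕ) (x : Fin (3 * n + 1)) : ℕ :=
  if (x : ℕ) = 3 * n then 3 * n
  else 3 * ((x : ℕ) / 3) +
    (if (x : ℕ) / 3 ∈ J then (x : ℕ) % 3
     else if (x : ℕ) % 3 = 0 then 1 else if (x : ℕ) % 3 = 1 then 0 else 2)

/-! Under `ord17` every agent has at most one neighbour voting before it, so the votes are
forced: the first voter of a path takes its top choice, and each later voter copies its
earlier-voting neighbour (of weight 1) if that vote is one of its two candidates, and takes its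
top choice otherwise.
A path `j ∈ J` therefore votes `c, c, c` and a path `j ∉ J` votes `c, a, b` (agents `3j, 3j+1,
3j+2`), while the isolated agent votes `a`. So `b` collects `B · ∑_{j ∉ J} k_j = KB`, `c` at most
`B · ∑_{j ∈ J} k_j + 2n = KB + 2n`, and the isolated agent alone gives `a` weight `KB + 2n`. -/

namespace WConsistent

variable {V C : Type*} [Fintype V] {adj : V → V → Prop} {w : V → ℕ}
  {P : V → Finset C} {p1 : V → C} {ord : V → ℕ} {f : V → C}

theorem eq_of_prior_eq_empty (hf : WConsistent adj w P p1 ord f) {x : V}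
    (hx : prior adj ord x = ∅) : f x = p1 x := by
  rcases hf x with ⟨c, -, hmaj, -⟩ | ⟨-, h⟩
  · simp [hx] at hmaj
  · exact h

theorem eq_of_prior_eq_singleton (hf : WConsistent adj w P p1 ord f) {x y : V}
    (hx : prior adj ord x = {y}) (hy : 0 < w y) :
    f x = if f y ∈ P x then f y else p1 x := by
  rcases hf x with ⟨c, hc, hmaj, rfl⟩ | ⟨hno, h⟩
  · rw [hx, filter_singleton, sum_singleton] at hmaj
    split_ifs at hmaj with hyc
    · rw [if_pos (hyc ▸ hc), hyc]
    · simp at hmaj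
  · rw [if_neg fun hyP => hno ⟨f y, hyP, by
    rw [hx, filter_singleton, if_pos rfl, sum_singleton]; exact lt_two_mul_self hy⟩, h]

end WConsistent

theorem sum_fin_ite_mem_of_subset {M : Type*} [AddCommMonoid M] {n : ℕ} {J : Finset ℕ}
    (hJ : J ⊆ range n) (g : ℕ → M) :
    ∑ j : Fin n, (if (j : ℕ) ∈ J then g j else 0) = ∑ j ∈ J, g j := by
  rw [Fin.sum_univ_eq_sum_range (fun j => if j ∈ J then g j else 0), sum_ite_mem,
    inter_eq_right.mpr hJ]

section Construction

variable {n : ℕ}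

def pathAgent (j : Fin n) (i : Fin 3) : Fin (3 * n + 1) :=
  ⟨3 * j + i, by omega⟩

theorem sum_eq_sum_pathAgent_add_last {M : Type*} [AddCommMonoid M]
    (g : Fin (3 * n + 1) → M) :
    ∑ x, g x = ∑ j : Fin n, (g (pathAgent j 0) + g (pathAgent j 1) + g (pathAgent j 2)) +
      g (Fin.last _) := by
  have hagent (j : Fin n) (i : Fin 3) :
      ((finProdFinEquiv.trans (finCongr (mul_comm n 3))) (j, i)).castSucc = pathAgent j i := by
    ext; simp [pathAgent, add_comm]
  rw [Fin.sum_univ_castSucc, ← (finProdFinEquiv.trans (finCongr (mul_comm n 3))).sum_comp,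
    Fintype.sum_prod_type]
  simp only [Fin.sum_univ_three, hagent]

theorem wscore_eq_sum_pathAgent_add_last {C : Type*} (w : Fin (3 * n + 1) → ℕ)
    (f : Fin (3 * n + 1) → C) (c : C) :
    wscore w f c = ∑ j : Fin n, ((if f (pathAgent j 0) = c then w (pathAgent j 0) else 0) +
        (if f (pathAgent j 1) = c then w (pathAgent j 1) else 0) +
        (if f (pathAgent j 2) = c then w (pathAgent j 2) else 0)) +
      if f (Fin.last _) = c then w (Fin.last _) else 0 := by
  rw [wscore, sum_filter, sum_eq_sum_pathAgent_add_last]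

theorem pathAgent_ne_three_mul (j : Fin n) (i : Fin 3) : (pathAgent j i : ℕ) ≠ 3 * n := by
  simp only [pathAgent]; omega

theorem pathAgent_div_three (j : Fin n) (i : Fin 3) : (pathAgent j i : ℕ) / 3 = j := by
  simp only [pathAgent]; omega

theorem pathAgent_mod_three (j : Fin n) (i : Fin 3) : (pathAgent j i : ℕ) % 3 = i := by
  simp only [pathAgent]; omega

variable (J : Finset ℕ)

def pathRank (j : ℕ) (i : Fin 3) : ℕ :=
  if j ∈ J then i else if (i : ℕ) = 0 then 1 else if (i : ℕ) = 1 then 0 else 2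

theorem ord17_pathAgent (j : Fin n) (i : Fin 3) :
    ord17 n J (pathAgent j i) = 3 * j + pathRank J j i := by
  simp only [ord17, pathRank, pathAgent_ne_three_mul, pathAgent_div_three, pathAgent_mod_three,
    if_false]

theorem adj7_pathAgent_iff (j : Fin n) (i : Fin 3) (y : Fin (3 * n + 1)) :
    adj7 n (pathAgent j i) y ↔
      ∃ i' : Fin 3, y = pathAgent j i' ∧ ((i : ℕ) + 1 = i' ∨ (i' : ℕ) + 1 = i) := by
  simp only [adj7, pathAgent, Fin.ext_iff]
  constructor
  · rintro ⟨h1, -, h2⟩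
    exact ⟨⟨y - 3 * j, by omega⟩, by simp; omega, by simp; omega⟩
  · rintro ⟨i', hy, h⟩
    omega

theorem prior_last : prior (adj7 n) (ord17 n J) (Fin.last _) = ∅ := by
  ext y
  simp [prior, adj7]

theorem prior_pathAgent (j : Fin n) (i : Fin 3) :
    prior (adj7 n) (ord17 n J) (pathAgent j i) =
      (univ.filter fun i' : Fin 3 => ((i : ℕ) + 1 = i' ∨ (i' : ℕ) + 1 = i) ∧
        pathRank J j i' < pathRank J j i).image (pathAgent j) := by
  ext y
  simp only [prior, mem_filter, mem_univ, true_and, mem_image, adj7_pathAgent_iff]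
  constructor
  · rintro ⟨⟨i', rfl, hi'⟩, hlt⟩
    simp only [ord17_pathAgent] at hlt
    exact ⟨i', ⟨hi', by omega⟩, rfl⟩
  · rintro ⟨i', ⟨hi', hlt⟩, rfl⟩
    simp only [ord17_pathAgent]
    exact ⟨⟨i', rfl, hi'⟩, by omega⟩

variable {J}

theorem prior_pathAgent_zero_of_mem {j : Fin n} (hj : (j : ℕ) ∈ J) :
    prior (adj7 n) (ord17 n J) (pathAgent j 0) = ∅ := by
  rw [prior_pathAgent, image_eq_empty]
  simp only [pathRank, if_pos hj]
  decide

theorem prior_pathAgent_one_of_mem {j : Fin n} (hj : (j : ℕ) ∈ J) :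
    prior (adj7 n) (ord17 n J) (pathAgent j 1) = {pathAgent j 0} := by
  rw [prior_pathAgent, ← image_singleton]
  simp only [pathRank, if_pos hj]
  congr 1

theorem prior_pathAgent_one_of_not_mem {j : Fin n} (hj : (j : ℕ) ∉ J) :
    prior (adj7 n) (ord17 n J) (pathAgent j 1) = ∅ := by
  rw [prior_pathAgent, image_eq_empty]
  simp only [pathRank, if_neg hj]
  decide

theorem prior_pathAgent_zero_of_not_mem {j : Fin n} (hj : (j : ℕ) ∉ J) :
    prior (adj7 n) (ord17 n J) (pathAgent j 0) = {pathAgent j 1} := by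
  rw [prior_pathAgent, ← image_singleton]
  simp only [pathRank, if_neg hj]
  congr 1

theorem prior_pathAgent_two (j : Fin n) :
    prior (adj7 n) (ord17 n J) (pathAgent j 2) = {pathAgent j 1} := by
  rw [prior_pathAgent, ← image_singleton]
  congr 1
  by_cases hj : (j : ℕ) ∈ J <;> simp only [pathRank, hj, if_true, if_false] <;> decide

theorem w7_pathAgent (K : ℕ) (k : ℕ → ℕ) (j : Fin n) (i : Fin 3) :
    w7 n K k (pathAgent j i) = if i = 2 then k j * B7 n else 1 := by
  simp [w7, pathAgent_ne_three_mul, pathAgent_mod_three, pathAgent_div_three, Fin.ext_iff]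

variable {K : ℕ} {k : ℕ → ℕ} {f : Fin (3 * n + 1) → Fin 3}

theorem vote_last (hf : WConsistent (adj7 n) (w7 n K k) (P7 n) (p17 n) (ord17 n J) f) :
    f (Fin.last _) = 0 := by
  rw [hf.eq_of_prior_eq_empty (prior_last J)]
  simp [p17]

theorem votes_pathAgent (hf : WConsistent (adj7 n) (w7 n K k) (P7 n) (p17 n) (ord17 n J) f)
    (j : Fin n) :
    f (pathAgent j 0) = 2 ∧ f (pathAgent j 1) = (if (j : ℕ) ∈ J then 2 else 0) ∧
      f (pathAgent j 2) = if (j : ℕ) ∈ J then 2 else 1 := by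
  have hw (i : Fin 3) (hi : i ≠ 2) : 0 < w7 n K k (pathAgent j i) := by
    simp [w7_pathAgent, hi]
  by_cases hj : (j : ℕ) ∈ J
  · have h0 : f (pathAgent j 0) = 2 := by
      rw [hf.eq_of_prior_eq_empty (prior_pathAgent_zero_of_mem hj)]
      simp [p17, pathAgent_ne_three_mul, pathAgent_mod_three]
    have h1 : f (pathAgent j 1) = 2 := by
      rw [hf.eq_of_prior_eq_singleton (prior_pathAgent_one_of_mem hj) (hw 0 (by decide)), h0]
      simp [P7, pathAgent_ne_three_mul, pathAgent_mod_three]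
    have h2 : f (pathAgent j 2) = 2 := by
      rw [hf.eq_of_prior_eq_singleton (prior_pathAgent_two j) (hw 1 (by decide)), h1]
      simp [P7, pathAgent_ne_three_mul, pathAgent_mod_three]
    simp [hj, h0, h1, h2]
  · have h1 : f (pathAgent j 1) = 0 := by
      rw [hf.eq_of_prior_eq_empty (prior_pathAgent_one_of_not_mem hj)]
      simp [p17, pathAgent_ne_three_mul, pathAgent_mod_three]
    have h0 : f (pathAgent j 0) = 2 := by
      rw [hf.eq_of_prior_eq_singleton (prior_pathAgent_zero_of_not_mem hj) (hw 1 (by decide)),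
        h1]
      simp [P7, p17, pathAgent_ne_three_mul, pathAgent_mod_three]
    have h2 : f (pathAgent j 2) = 1 := by
      rw [hf.eq_of_prior_eq_singleton (prior_pathAgent_two j) (hw 1 (by decide)), h1]
      simp [P7, p17, pathAgent_ne_three_mul, pathAgent_mod_three]
    simp [hj, h0, h1, h2]

theorem wscore_one_eq (hJ : J ⊆ range n) (hsum : ∑ j ∈ range n, k j = 2 * K)
    (hsumJ : ∑ j ∈ J, k j = K)
    (hf : WConsistent (adj7 n) (w7 n K k) (P7 n) (p17 n) (ord17 n J) f) :
    wscore (w7 n K k) f 1 = K * B7 n := by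
  have hpath : wscore (w7 n K k) f 1 = ∑ j : Fin n, if (j : ℕ) ∈ J then 0 else k j * B7 n := by
    rw [wscore_eq_sum_pathAgent_add_last, vote_last hf]
    simp only [if_neg (by decide : (0 : Fin 3) ≠ 1), add_zero]
    refine sum_congr rfl fun j _ => ?_
    obtain ⟨h0, h1, h2⟩ := votes_pathAgent hf j
    by_cases hj : (j : ℕ) ∈ J <;> simp [h0, h1, h2, hj, w7_pathAgent]
  have hsplit : (∑ j : Fin n, if (j : ℕ) ∈ J then 0 else k j * B7 n) + ∑ j ∈ J, k j * B7 n =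
      ∑ j ∈ range n, k j * B7 n := by
    rw [← sum_fin_ite_mem_of_subset hJ, ← sum_add_distrib,
      ← Fin.sum_univ_eq_sum_range (fun j => k j * B7 n)]
    exact sum_congr rfl fun j _ => by split_ifs <;> simp
  rw [← sum_mul, ← sum_mul, hsum, hsumJ] at hsplit
  rw [hpath]
  linarith

theorem wscore_two_le (hJ : J ⊆ range n) (hsumJ : ∑ j ∈ J, k j = K)
    (hf : WConsistent (adj7 n) (w7 n K k) (P7 n) (p17 n) (ord17 n J) f) :
    wscore (w7 n K k) f 2 ≤ K * B7 n + 2 * n := by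
  have hpath : wscore (w7 n K k) f 2 =
      ∑ j : Fin n, if (j : ℕ) ∈ J then 2 + k j * B7 n else 1 := by
    rw [wscore_eq_sum_pathAgent_add_last, vote_last hf]
    simp only [if_neg (by decide : (0 : Fin 3) ≠ 2), add_zero]
    refine sum_congr rfl fun j _ => ?_
    obtain ⟨h0, h1, h2⟩ := votes_pathAgent hf j
    by_cases hj : (j : ℕ) ∈ J <;> simp [h0, h1, h2, hj, w7_pathAgent]
  calc wscore (w7 n K k) f 2
      ≤ ∑ j : Fin n, (2 + if (j : ℕ) ∈ J then k j * B7 n else 0) :=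
        hpath ▸ sum_le_sum fun j _ => by split_ifs <;> omega
    _ = K * B7 n + 2 * n := by
        rw [sum_add_distrib, sum_fin_ite_mem_of_subset hJ (fun j => k j * B7 n), ← sum_mul,
          hsumJ]
        simp [mul_comm, add_comm]

theorem le_wscore_zero (hf : WConsistent (adj7 n) (w7 n K k) (P7 n) (p17 n) (ord17 n J) f) :
    K * B7 n + 2 * n ≤ wscore (w7 n K k) f 0 := by
  rw [wscore_eq_sum_pathAgent_add_last, vote_last hf]
  simp [w7]

end Construction

/-- If `J ⊆ {0,…,n-1}` satisfies `∑_{j ∈ J} k_j = K`, then the voting order `ord17`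
yields final scores `score(b) = KB`, `score(c) ≤ KB + 2n`, `score(a) ≥ KB + 2n`, so
that `a` is a co-winner. (Candidates: `a = 0`, `b = 1`, `c = 2`.) -/
theorem partition_order_scores
    (n K : ℕ) (k : ℕ → ℕ) (J : Finset ℕ)
    (hJ : J ⊆ Finset.range n)
    (hsum : ∑ j ∈ Finset.range n, k j = 2 * K)
    (hsumJ : ∑ j ∈ J, k j = K)
    (f : Fin (3 * n + 1) → Fin 3)
    (hf : WConsistent (adj7 n) (w7 n K k) (P7 n) (p17 n) (ord17 n J) f) :
    wscore (w7 n K k) f 1 = K * B7 n ∧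
    wscore (w7 n K k) f 2 ≤ K * B7 n + 2 * n ∧
    K * B7 n + 2 * n ≤ wscore (w7 n K k) f 0 ∧
    ∀ d : Fin 3, wscore (w7 n K k) f d ≤ wscore (w7 n K k) f 0 := by
  have hb := wscore_one_eq hJ hsum hsumJ hf
  have hc := wscore_two_le hJ hsumJ hf
  have ha := le_wscore_zero hf
  refine ⟨hb, hc, ha, fun d => ?_⟩
  fin_cases d <;> simp only [Fin.zero_eta, Fin.mk_one, Fin.reduceFinMk] <;> omega
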